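/- arXiv:1508.01459 — 3 statements merged into one kernel-verified Lean document; each statement's English description precedes it below -/
import Mathlib

section
/- If |N| ≥ |U|, each UE has quota 1, and all entries of the |U| × |N| utility matrix are pairwise distinct, with preferences of both UEs and RBs derived from this common matrix (each side ranks the other by the matrix entries), then there exists exactly one stable matching. -/
/-!
Existence: the pair of largest utility is mutually top-ranked, so matching it and recursing on the
pairs that avoid both of its members gives a matching that no pair can block. Uniqueness: if two
stable matchings differ, the pair of largest utility on which they disagree lies in one of them and
blocks the other, because every pair it would have to beat is also one of disagreement.
-/

namespace UtilityMatching

variable {U N : Type*}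

def IsMatching (μ : U → Option N) : Prop :=
  ∀ u u' n, μ u = some n → μ u' = some n → u = u'

def IsBlockingPair (𝔘 : U → N → ℝ) (μ : U → Option N) (u : U) (n : N) : Prop :=
  (μ u = none ∨ ∃ n', μ u = some n' ∧ 𝔘 u n' < 𝔘 u n) ∧
    ((∀ u', μ u' ≠ some n) ∨ ∃ u', μ u' = some n ∧ 𝔘 u' n < 𝔘 u n)

def IsStable (𝔘 : U → N → ℝ) (μ : U → Option N) : Prop :=
  IsMatching μ ∧ ¬ ∃ u n, IsBlockingPair 𝔘 μ u n

theorem IsMatching.update [DecidableEq U] {μ : U → Option N} (hμ : IsMatching μ) {n : N}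
    (hn : ∀ u, μ u ≠ some n) (u₀ : U) : IsMatching (Function.update μ u₀ (some n)) := by
  intro u u' m hu hu'
  by_cases h : u = u₀ <;> by_cases h' : u' = u₀ <;>
    simp_all [Function.update_of_ne, hμ u u' m]

theorem isBlockingPair_congr {𝔘 : U → N → ℝ} {μ ν : U → Option N} {u : U} {n : N}
    (hu : μ u = ν u) (hn : ∀ u', μ u' = some n ↔ ν u' = some n) :
    IsBlockingPair 𝔘 μ u n ↔ IsBlockingPair 𝔘 ν u n := by
  simp only [IsBlockingPair, hu, ne_eq, hn]

theorem exists_isMatching_forall_not_isBlockingPair (𝔘 : U → N → ℝ) (P : Finset (U × N)) :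
    ∃ μ : U → Option N, IsMatching μ ∧ (∀ u n, μ u = some n → (u, n) ∈ P) ∧
      ∀ p ∈ P, ¬ IsBlockingPair 𝔘 μ p.1 p.2 := by
  classical
  induction P using Finset.strongInduction with
  | H P ih =>
  rcases P.eq_empty_or_nonempty with rfl | hP
  · exact ⟨fun _ => none, by simp [IsMatching], by simp, by simp⟩
  obtain ⟨⟨u₀, n₀⟩, h₀, hmax⟩ := P.exists_max_image (fun p => 𝔘 p.1 p.2) hP
  obtain ⟨μ, hμ, hμP, hμstable⟩ :=
    ih (P.filter fun p => p.1 ≠ u₀ ∧ p.2 ≠ n₀) (Finset.filter_ssubset.2 ⟨_, h₀, by simp⟩)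
  have hμu₀ : μ u₀ = none := Option.eq_none_iff_forall_ne_some.2 fun n h => by
    simpa using hμP _ _ h
  have hμn₀ : ∀ u, μ u ≠ some n₀ := fun u h => by simpa using hμP _ _ h
  refine ⟨Function.update μ u₀ (some n₀), hμ.update hμn₀ u₀, fun u n h => ?_, ?_⟩
  · by_cases hu : u = u₀
    · simp_all
    · rw [Function.update_of_ne hu] at h
      exact (Finset.mem_filter.1 (hμP u n h)).1
  rintro ⟨u, n⟩ hP ⟨hu, hn⟩
  by_cases hu₀ : u = u₀
  · subst hu₀
    obtain ⟨n', hn', hlt⟩ := hu.resolve_left (by simp)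
    obtain rfl : n' = n₀ := by simpa using hn'.symm
    exact (hmax _ hP).not_gt hlt
  by_cases hn₀ : n = n₀
  · subst hn₀
    obtain ⟨u', hu', hlt⟩ := hn.resolve_left fun h => h u₀ (by simp)
    obtain rfl : u' = u₀ := by
      by_contra h
      exact hμn₀ u' (by rwa [Function.update_of_ne h] at hu')
    exact (hmax _ hP).not_gt hlt
  refine hμstable (u, n) (Finset.mem_filter.2 ⟨hP, hu₀, hn₀⟩)
    ((isBlockingPair_congr ?_ ?_).1 ⟨hu, hn⟩)
  · exact Function.update_of_ne hu₀ _ _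
  · intro u'
    by_cases h : u' = u₀
    · subst h
      simp [hμu₀, Ne.symm hn₀]
    · rw [Function.update_of_ne h]

theorem isBlockingPair_of_forall_lt {𝔘 : U → N → ℝ} {μ ν : U → Option N} (hμ : IsMatching μ)
    {u : U} {n : N} (hμu : μ u = some n) (hνu : ν u ≠ some n)
    (hmax : ∀ u' n', ν u' = some n' → μ u' ≠ some n' → 𝔘 u' n' < 𝔘 u n) :
    IsBlockingPair 𝔘 ν u n := by
  refine ⟨?_, ?_⟩
  · cases hν : ν u with
    | none => exact .inl rfl
    | some n' =>
      have hn' : n' ≠ n := fun h => hνu (h ▸ hν)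
      exact .inr ⟨n', rfl, hmax u n' hν (by simpa [hμu] using hn'.symm)⟩
  · by_cases h : ∃ u', ν u' = some n
    · obtain ⟨u', hu'⟩ := h
      have hne : u' ≠ u := fun h => hνu (h ▸ hu')
      exact .inr ⟨u', hu', hmax u' n hu' fun h => hne (hμ u' u n h hμu)⟩
    · exact .inl fun u' hu' => h ⟨u', hu'⟩

theorem IsStable.eq [Fintype U] [Fintype N] {𝔘 : U → N → ℝ}
    (hinj : Function.Injective fun p : U × N => 𝔘 p.1 p.2) {μ ν : U → Option N}
    (hμ : IsStable 𝔘 μ) (hν : IsStable 𝔘 ν) : μ = ν := by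
  classical
  by_contra hne
  set D := Finset.univ.filter fun p : U × N => ¬ (μ p.1 = some p.2 ↔ ν p.1 = some p.2)
  have hD : D.Nonempty := by
    obtain ⟨u, hu⟩ := Function.ne_iff.1 hne
    cases hμu : μ u with
    | some n => exact ⟨(u, n), by simp [D, hμu, Ne.symm (hμu ▸ hu)]⟩
    | none =>
      obtain ⟨n, hn⟩ := Option.ne_none_iff_exists'.1 (hμu ▸ hu).symm
      exact ⟨(u, n), by simp [D, hμu, hn]⟩
  obtain ⟨⟨u, n⟩, hp, hmax⟩ := D.exists_max_image (fun p => 𝔘 p.1 p.2) hD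
  have hlt : ∀ u' n', ¬ (μ u' = some n' ↔ ν u' = some n') → (u', n') ≠ (u, n) →
      𝔘 u' n' < 𝔘 u n := fun u' n' hq hne =>
    (hmax (u', n') (by simpa [D] using hq)).lt_of_ne fun h => hne (hinj h)
  by_cases hμu : μ u = some n
  · have hνu : ν u ≠ some n := fun h => by simp [D, hμu, h] at hp
    refine hν.2 ⟨u, n, isBlockingPair_of_forall_lt hμ.1 hμu hνu fun u' n' h h' => ?_⟩
    exact hlt u' n' (by simp [h, h']) (by rintro ⟨⟩; exact h' hμu)
  · have hνu : ν u = some n := by simpa [D, hμu] using hp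
    refine hμ.2 ⟨u, n, isBlockingPair_of_forall_lt hν.1 hνu hμu fun u' n' h h' => ?_⟩
    exact hlt u' n' (by simp [h, h']) (by rintro ⟨⟩; exact h' hνu)

end UtilityMatching

theorem stmt_7_general {U N : Type*} [Fintype U] [Fintype N]
    (𝔘 : U → N → ℝ)
    (hinj : Function.Injective (fun p : U × N => 𝔘 p.1 p.2)) :
    ∃! μ : U → Option N,
      (∀ u u' n, μ u = some n → μ u' = some n → u = u') ∧
      ¬ ∃ (u : U) (n : N),
          (μ u = none ∨ ∃ n', μ u = some n' ∧ 𝔘 u n' < 𝔘 u n) ∧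
          ((∀ u', μ u' ≠ some n) ∨ ∃ u', μ u' = some n ∧ 𝔘 u' n < 𝔘 u n) := by
  obtain ⟨μ, hμ, -, hμstable⟩ :=
    UtilityMatching.exists_isMatching_forall_not_isBlockingPair 𝔘 Finset.univ
  have hstable : UtilityMatching.IsStable 𝔘 μ :=
    ⟨hμ, fun ⟨u, n, h⟩ => hμstable (u, n) (Finset.mem_univ _) h⟩
  exact ⟨μ, hstable, fun ν hν => UtilityMatching.IsStable.eq hinj hν hstable⟩

/-- Uniqueness of the stable matching (Proposition 3): if there are at least as
many RBs as UEs, every quota is 1, and preferences of both UEs and RBs are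
derived from a common utility matrix `𝔘` with pairwise distinct entries, then
there exists exactly one stable matching.  A matching `μ : U → Option N`
assigns each UE at most one RB, injectively; it is stable iff there is no
blocking pair `(u, n)`, i.e. no pair such that `u` prefers `n` to its current
assignment (or is unmatched) and `n` is free or held by a UE that `n` likes
less than `u`. -/
theorem stmt_7 {U N : Type*} [Fintype U] [Fintype N] [DecidableEq U] [DecidableEq N]
    (𝔘 : U → N → ℝ)
    (hcard : Fintype.card U ≤ Fintype.card N)
    (hinj : Function.Injective (fun p : U × N => 𝔘 p.1 p.2)) :
    ∃! μ : U → Option N,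
      (∀ u u' n, μ u = some n → μ u' = some n → u = u') ∧
      ¬ ∃ (u : U) (n : N),
          (μ u = none ∨ ∃ n', μ u = some n' ∧ 𝔘 u n' < 𝔘 u n) ∧
          ((∀ u', μ u' ≠ some n) ∨ ∃ u', μ u' = some n ∧ 𝔘 u' n < 𝔘 u n) :=
  stmt_7_general 𝔘 hinj
end

section
/- In the setting of a common utility matrix with distinct entries, if (i,j) is the pair attaining the maximal entry of 𝔘, then every stable matching μ satisfies μ(i) = j. -/
/-- If `(i, j)` is the pair attaining the maximal entry of the common utility
matrix `𝔘` (with pairwise distinct entries, quotas all 1), then every stable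
matching `μ` satisfies `μ i = some j`. -/
theorem stmt_8 {U N : Type*} [Fintype U] [Fintype N] [DecidableEq U] [DecidableEq N]
    (𝔘 : U → N → ℝ) (i : U) (j : N)
    (hinj : Function.Injective (fun p : U × N => 𝔘 p.1 p.2))
    (hmax : ∀ u n, (u, n) ≠ (i, j) → 𝔘 u n < 𝔘 i j)
    (μ : U → Option N)
    (hmatch : ∀ u u' n, μ u = some n → μ u' = some n → u = u')
    (hstable : ¬ ∃ (u : U) (n : N),
      (μ u = none ∨ ∃ n', μ u = some n' ∧ 𝔘 u n' < 𝔘 u n) ∧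
      ((∀ u', μ u' ≠ some n) ∨ ∃ u', μ u' = some n ∧ 𝔘 u' n < 𝔘 u n)) :
    μ i = some j := by
  by_contra hne
  apply hstable
  refine ⟨i, j, ?_, ?_⟩
  · cases h : μ i with
    | none => exact Or.inl rfl
    | some n' =>
      refine Or.inr ⟨n', rfl, hmax i n' ?_⟩
      intro he
      rw [Prod.mk.injEq] at he
      exact hne (h.trans (by rw [he.2]))
  · by_cases hb : ∃ u', μ u' = some j
    · obtain ⟨u', hu'⟩ := hb
      refine Or.inr ⟨u', hu', hmax u' j ?_⟩
      intro he
      rw [Prod.mk.injEq] at he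
      exact hne (he.1 ▸ hu')
    · exact Or.inl (fun u' h => hb ⟨u', h⟩)
end

section
/- Removing a matched maximal pair preserves stability: if (i,j) attains the maximum of the injective utility matrix 𝔘 and μ is a stable matching for 𝔘, then μ restricted to (U \ {i}) × (N \ {j}) is a stable matching for the restricted utility matrix. -/
/-!
If `i` and `j` were not partners, each would strictly prefer the other to its current situation,
since `𝔘 i j` is the largest utility of all; so `(i, j)` would block `μ`, and stability forces
`μ i = some j`. Removing a pair of partners changes no other partnership and leaves no other
agent unmatched, so a blocking pair of the restricted matching already blocks `μ`.
-/

namespace TwoSidedMatching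

variable {U N α : Type*}

def IsMatching (μ : U → Option N) : Prop :=
  ∀ u u' n, μ u = some n → μ u' = some n → u = u'

def IsBlockingPair [LT α] (𝔘 : U → N → α) (μ : U → Option N) (u : U) (n : N) : Prop :=
  (μ u = none ∨ ∃ n', μ u = some n' ∧ 𝔘 u n' < 𝔘 u n) ∧
    ((∀ u', μ u' ≠ some n) ∨ ∃ u', μ u' = some n ∧ 𝔘 u' n < 𝔘 u n)

def IsStable [LT α] (𝔘 : U → N → α) (μ : U → Option N) : Prop :=
  IsMatching μ ∧ ¬ ∃ u n, IsBlockingPair 𝔘 μ u n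

def restrict [DecidableEq N] (μ : U → Option N) (i : U) (j : N) :
    {u // u ≠ i} → Option {n // n ≠ j} :=
  fun u => (μ u.1).bind fun n => if h : n = j then none else some ⟨n, h⟩

variable [DecidableEq N] {μ : U → Option N} {i : U} {j : N}

theorem restrict_eq_some_iff {u : {u // u ≠ i}} {n : {n // n ≠ j}} :
    restrict μ i j u = some n ↔ μ u = some n := by
  obtain ⟨n, hn⟩ := n
  cases h : μ u with
  | none => simp [restrict, h]
  | some m => by_cases hm : m = j <;> simp [restrict, h, hm, hn.symm]

theorem restrict_eq_none_iff (hμ : IsMatching μ) (hij : μ i = some j) {u : {u // u ≠ i}} :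
    restrict μ i j u = none ↔ μ u = none := by
  cases h : μ u with
  | none => simp [restrict, h]
  | some m =>
    have hm : m ≠ j := by
      rintro rfl
      exact u.2 (hμ _ _ _ h hij)
    simp [restrict, h, hm]

theorem IsMatching.restrict (hμ : IsMatching μ) : IsMatching (restrict μ i j) :=
  fun _ _ _ h h' => Subtype.ext (hμ _ _ _ (restrict_eq_some_iff.1 h) (restrict_eq_some_iff.1 h'))

theorem IsBlockingPair.of_restrict [LT α] {𝔘 : U → N → α} (hμ : IsMatching μ)
    (hij : μ i = some j) {u : {u // u ≠ i}} {n : {n // n ≠ j}}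
    (h : IsBlockingPair (fun u n => 𝔘 u.1 n.1) (restrict μ i j) u n) :
    IsBlockingPair 𝔘 μ u n := by
  obtain ⟨hu, hn⟩ := h
  refine ⟨hu.imp (restrict_eq_none_iff hμ hij).1 fun ⟨n', hn', hlt⟩ ↦
      ⟨n', restrict_eq_some_iff.1 hn', hlt⟩, hn.imp ?_ fun ⟨u', hu', hlt⟩ ↦
      ⟨u', restrict_eq_some_iff.1 hu', hlt⟩⟩
  intro hfree u' hu'
  have hu'i : u' ≠ i := by
    rintro rfl
    exact n.2 (Option.some.inj (hu'.symm.trans hij))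
  exact hfree ⟨u', hu'i⟩ (restrict_eq_some_iff.2 hu')

theorem IsStable.apply_eq_some_of_max [LT α] {𝔘 : U → N → α} (hs : IsStable 𝔘 μ)
    (hmax : ∀ u n, (u, n) ≠ (i, j) → 𝔘 u n < 𝔘 i j) : μ i = some j := by
  by_contra hij
  refine hs.2 ⟨i, j, ?_, ?_⟩
  · cases hi : μ i with
    | none => exact Or.inl rfl
    | some n => exact Or.inr ⟨n, rfl, hmax i n fun h ↦ hij (by simp_all)⟩
  · by_cases hj : ∃ u', μ u' = some j
    · obtain ⟨u', hu'⟩ := hj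
      have hu'i : u' ≠ i := by
        rintro rfl
        exact hij hu'
      exact Or.inr ⟨u', hu', hmax u' j (by simp [hu'i])⟩
    · exact Or.inl fun u' hu' ↦ hj ⟨u', hu'⟩

theorem IsStable.restrict [LT α] {𝔘 : U → N → α} (hs : IsStable 𝔘 μ)
    (hmax : ∀ u n, (u, n) ≠ (i, j) → 𝔘 u n < 𝔘 i j) :
    IsStable (fun u n => 𝔘 u.1 n.1) (restrict μ i j) :=
  ⟨hs.1.restrict, fun ⟨u, n, h⟩ ↦ hs.2 ⟨u, n, h.of_restrict hs.1 (hs.apply_eq_some_of_max hmax)⟩⟩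

end TwoSidedMatching

open TwoSidedMatching in
theorem stmt_9_general {U N : Type*} [DecidableEq N]
    (𝔘 : U → N → ℝ) (i : U) (j : N)
    (hmax : ∀ u n, (u, n) ≠ (i, j) → 𝔘 u n < 𝔘 i j)
    (μ : U → Option N)
    (hmatch : ∀ u u' n, μ u = some n → μ u' = some n → u = u')
    (hstable : ¬ ∃ (u : U) (n : N),
      (μ u = none ∨ ∃ n', μ u = some n' ∧ 𝔘 u n' < 𝔘 u n) ∧
      ((∀ u', μ u' ≠ some n) ∨ ∃ u', μ u' = some n ∧ 𝔘 u' n < 𝔘 u n)) :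
    -- the restricted matching on `U \ {i}` and `N \ {j}`
    ∀ μ' : {u : U // u ≠ i} → Option {n : N // n ≠ j},
      (μ' = fun u => (μ u.1).bind (fun n => if h : n = j then none else some ⟨n, h⟩)) →
      (∀ u u' n, μ' u = some n → μ' u' = some n → u = u') ∧
      ¬ ∃ (u : {u : U // u ≠ i}) (n : {n : N // n ≠ j}),
          (μ' u = none ∨ ∃ n', μ' u = some n' ∧ 𝔘 u.1 n'.1 < 𝔘 u.1 n.1) ∧
          ((∀ u', μ' u' ≠ some n) ∨ ∃ u', μ' u' = some n ∧ 𝔘 u'.1 n.1 < 𝔘 u.1 n.1) := by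
  rintro _ rfl
  exact IsStable.restrict (𝔘 := 𝔘) ⟨hmatch, hstable⟩ hmax

/-- Removing a matched maximal pair preserves stability: if `(i, j)` attains
the maximum of the injective utility matrix `𝔘` and `μ` is a stable matching
for `𝔘` (quotas 1, preferences of both sides induced by `𝔘`), then the
restriction of `μ` to `(U \ {i}) × (N \ {j})` is a stable matching for the
restricted utility matrix. -/
theorem stmt_9 {U N : Type*} [Fintype U] [Fintype N] [DecidableEq U] [DecidableEq N]
    (𝔘 : U → N → ℝ) (i : U) (j : N)
    (hinj : Function.Injective (fun p : U × N => 𝔘 p.1 p.2))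
    (hmax : ∀ u n, (u, n) ≠ (i, j) → 𝔘 u n < 𝔘 i j)
    (μ : U → Option N)
    (hmatch : ∀ u u' n, μ u = some n → μ u' = some n → u = u')
    (hstable : ¬ ∃ (u : U) (n : N),
      (μ u = none ∨ ∃ n', μ u = some n' ∧ 𝔘 u n' < 𝔘 u n) ∧
      ((∀ u', μ u' ≠ some n) ∨ ∃ u', μ u' = some n ∧ 𝔘 u' n < 𝔘 u n)) :
    -- the restricted matching on `U \ {i}` and `N \ {j}`
    ∀ μ' : {u : U // u ≠ i} → Option {n : N // n ≠ j},
      (μ' = fun u => (μ u.1).bind (fun n => if h : n = j then none else some ⟨n, h⟩)) →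
      (∀ u u' n, μ' u = some n → μ' u' = some n → u = u') ∧
      ¬ ∃ (u : {u : U // u ≠ i}) (n : {n : N // n ≠ j}),
          (μ' u = none ∨ ∃ n', μ' u = some n' ∧ 𝔘 u.1 n'.1 < 𝔘 u.1 n.1) ∧
          ((∀ u', μ' u' ≠ some n) ∨ ∃ u', μ' u' = some n ∧ 𝔘 u'.1 n.1 < 𝔘 u.1 n.1) :=
  stmt_9_general 𝔘 i j hmax μ hmatch hstable
end
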